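/- arXiv:math-ph/0312041 — 3 statements merged into one kernel-verified Lean document; each statement's English description precedes it below -/
import Mathlib

section
/- Lemma 3.3 (constancy of spin on components of the complement). Let (Λ, σ) be either a contour or a contour network on T_L, and let C be a connected component of T_L ∖ Λ°. Then σ is constant on C. Likewise, if (Λ, σ) is a contour on ℤ^d, then σ is constant on each connected component C of ℤ^d ∖ Λ°, where now Λ° = Λ ∖ ∂(ℤ^d ∖ Λ). -/
open scoped BigOperators Classical
noncomputable section

/-! ### Generic graph-theoretic notions on a lattice -/

/-- A path inside the set `A` using the adjacency relation `adj`. -/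
def pathIn {X : Type*} (adj : X → X → Prop) (A : Set X) (x y : X) : Prop :=
  Relation.ReflTransGen (fun u v => adj u v ∧ u ∈ A ∧ v ∈ A) x y

/-- `A` is a connected set of sites. -/
def connectedIn {X : Type*} (adj : X → X → Prop) (A : Set X) : Prop :=
  ∀ x ∈ A, ∀ y ∈ A, pathIn adj A x y

/-- The connected component of `x` inside `A`. -/
def compOf {X : Type*} (adj : X → X → Prop) (A : Set X) (x : X) : Set X :=
  {y | pathIn adj A x y}

/-- `C` is a connected component of `A`. -/
def IsCompOf {X : Type*} (adj : X → X → Prop) (C A : Set X) : Prop :=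
  ∃ x ∈ A, C = compOf adj A x

/-- External boundary `∂A`: sites outside `A` adjacent to `A`. -/
def extBd {X : Type*} (adj : X → X → Prop) (A : Set X) : Set X :=
  {x | x ∉ A ∧ ∃ y ∈ A, adj x y}

/-- `∂(Aᶜ)`: the sites of `A` adjacent to the complement of `A`. -/
def ringBd {X : Type*} (adj : X → X → Prop) (A : Set X) : Set X :=
  {x | x ∈ A ∧ ∃ y, y ∉ A ∧ adj x y}

/-- `A° = A ∖ ∂(Aᶜ)`. -/
def interior' {X : Type*} (adj : X → X → Prop) (A : Set X) : Set X :=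
  A \ ringBd adj A

/-- A configuration is constant on a set. -/
def constOn {X S : Type*} (σ : X → S) (A : Set X) : Prop :=
  ∀ x ∈ A, ∀ y ∈ A, σ x = σ y

/-! ### The lattice ℤ^d -/

/-- Sites of the lattice `ℤ^d`. -/
abbrev Site (d : ℕ) := Fin d → ℤ

/-- Nearest-neighbour adjacency on `ℤ^d`. -/
def adjZ {d : ℕ} (x y : Site d) : Prop := (∑ i, (x i - y i).natAbs) = 1

/-- The cubic box with corner `a` and side (diameter) `s`. -/
def boxZ {d : ℕ} (a : Site d) (s : ℕ) : Set (Site d) :=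
  {x | ∀ i, a i ≤ x i ∧ x i < a i + s}

/-- The diameter of `A ⊆ ℤ^d`: the side of the smallest cubic box containing `A`. -/
def diamZ {d : ℕ} (A : Set (Site d)) : ℕ := sInf {s | ∃ a, A ⊆ boxZ a s}

/-- The `R`-boundary `B_R(σ)` of a configuration `σ`. -/
def BRZ (R : ℕ) {d : ℕ} {S : Type*} (σ : Site d → S) : Set (Site d) :=
  {x | ∃ a, x ∈ boxZ a (2 * R + 1) ∧ ¬ constOn σ (boxZ a (2 * R + 1))}

/-- Adjacency in the graph `G_R(σ)`. -/
def gadjZ (R : ℕ) {d : ℕ} {S : Type*} (σ : Site d → S) (x y : Site d) : Prop :=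
  x ≠ y ∧ ∃ a, x ∈ boxZ a (2 * R + 1) ∧ y ∈ boxZ a (2 * R + 1) ∧
    ¬ constOn σ (boxZ a (2 * R + 1))

/-- A contour on `ℤ^d`. -/
structure ZContour (d : ℕ) (S : Type*) (R : ℕ) where
  supp : Set (Site d)
  conf : Site d → S
  finite : supp.Finite
  nonempty : supp.Nonempty
  conn : connectedIn adjZ supp
  gconn : ∀ x ∈ BRZ R conf, ∀ y ∈ BRZ R conf, Relation.ReflTransGen (gadjZ R conf) x y
  br : BRZ R conf = supp

namespace ZContour

variable {d R : ℕ} {S : Type*}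

/-- `|Y|`, the number of sites in the support of `Y`. -/
def size (Y : ZContour d S R) : ℕ := Y.supp.ncard

/-- The exterior of a contour: the union of infinite components of the complement. -/
def Ext (Y : ZContour d S R) : Set (Site d) :=
  {x | x ∉ Y.supp ∧ (compOf adjZ Y.suppᶜ x).Infinite}

/-- The interior of a contour: the union of finite components of the complement. -/
def Int (Y : ZContour d S R) : Set (Site d) :=
  {x | x ∉ Y.supp ∧ (compOf adjZ Y.suppᶜ x).Finite}

/-- The part of the interior with label `m`. -/
def IntM (m : S) (Y : ZContour d S R) : Set (Site d) := {x ∈ Y.Int | Y.conf x = m}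

/-- `V(Y) = supp Y ∪ Int Y`. -/
def V (Y : ZContour d S R) : Set (Site d) := Y.supp ∪ Y.Int

/-- `Y` is a `q`-contour. -/
def IsQ (q : S) (Y : ZContour d S R) : Prop := ∀ x ∈ Y.Ext, Y.conf x = q

end ZContour

/-! ### The torus T_L -/

/-- Sites of the torus `T_L = ℤ^d/(Lℤ)^d`. -/
abbrev Tor (d L : ℕ) := Fin d → ZMod L

/-- Nearest-neighbour adjacency on the torus. -/
def tadj {d L : ℕ} (x y : Tor d L) : Prop :=
  ∃ i, (y i = x i + 1 ∨ x i = y i + 1) ∧ ∀ j, j ≠ i → x j = y j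

/-- A cubic box on the torus with corner `a` and side (diameter) `s`. -/
def tbox {d L : ℕ} (a : Tor d L) (s : ℕ) : Set (Tor d L) :=
  {x | ∀ i, ∃ k : ℕ, k < s ∧ x i = a i + (k : ZMod L)}

/-- The diameter of `A ⊆ T_L`. -/
def tdiam {d L : ℕ} (A : Set (Tor d L)) : ℕ := sInf {s | ∃ a, A ⊆ tbox a s}

/-- The `R`-boundary `B_R(σ)` of a configuration on the torus. -/
def BRT (R : ℕ) {d L : ℕ} {S : Type*} (σ : Tor d L → S) : Set (Tor d L) :=
  {x | ∃ a, x ∈ tbox a (2 * R + 1) ∧ ¬ constOn σ (tbox a (2 * R + 1))}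

/-- Adjacency in the graph `G_R(σ)` on the torus. -/
def gadjT (R : ℕ) {d L : ℕ} {S : Type*} (σ : Tor d L → S) (x y : Tor d L) : Prop :=
  x ≠ y ∧ ∃ a, x ∈ tbox a (2 * R + 1) ∧ y ∈ tbox a (2 * R + 1) ∧
    ¬ constOn σ (tbox a (2 * R + 1))

/-- A contour on the torus `T_L`. -/
structure TContour (d L : ℕ) (S : Type*) (R : ℕ) where
  supp : Set (Tor d L)
  conf : Tor d L → S
  nonempty : supp.Nonempty
  conn : connectedIn tadj supp
  small : 2 * tdiam supp < L
  gconn : ∀ x ∈ BRT R conf, ∀ y ∈ BRT R conf, Relation.ReflTransGen (gadjT R conf) x y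
  br : BRT R conf = supp

/-- A contour network on the torus `T_L`. -/
structure TNetwork (d L : ℕ) (S : Type*) (R : ℕ) where
  supp : Set (Tor d L)
  conf : Tor d L → S
  br : BRT R conf = supp
  big : ∀ x ∈ supp, L ≤ 2 * tdiam (compOf (gadjT R conf) (BRT R conf) x)

/-- The exterior of a subset of the torus:  the unique component of the complement
containing more than `L^d/2` sites (for a nonempty connected set of diameter `< L/2`);
`∅` otherwise. -/
def tExt {d L : ℕ} (Λ : Set (Tor d L)) : Set (Tor d L) :=
  if connectedIn tadj Λ ∧ Λ.Nonempty ∧ 2 * tdiam Λ < L then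
    {x | x ∉ Λ ∧ L ^ d < 2 * (compOf tadj Λᶜ x).ncard}
  else ∅

/-- The interior of a subset of the torus. -/
def tInt {d L : ℕ} (Λ : Set (Tor d L)) : Set (Tor d L) := (Λ ∪ tExt Λ)ᶜ

namespace TContour
variable {d L R : ℕ} {S : Type*}
def size (Y : TContour d L S R) : ℕ := Y.supp.ncard
def Ext (Y : TContour d L S R) : Set (Tor d L) := tExt Y.supp
def Int (Y : TContour d L S R) : Set (Tor d L) := tInt Y.supp
def IntM (m : S) (Y : TContour d L S R) : Set (Tor d L) :=
  {x ∈ Y.Int | Y.conf x = m}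
def IsQ (q : S) (Y : TContour d L S R) : Prop := ∀ x ∈ Y.Ext, Y.conf x = q
end TContour


/-! ### Auxiliary lemmas for Lemma 3.3 -/

lemma constOn_comp_aux {X S : Type*} {adj : X → X → Prop} {A : Set X} {σ : X → S}
    (h : ∀ u v, u ∈ A → adj u v → σ u = σ v) {C : Set X} (hC : IsCompOf adj C A) :
    constOn σ C := by
  obtain ⟨x, hx, rfl⟩ := hC
  have key : ∀ y, pathIn adj A x y → σ x = σ y := by
    intro y hp
    induction hp with
    | refl => rfl
    | tail _ h2 ih => exact ih.trans (h _ _ h2.2.1 h2.1)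
  intro y hy z hz
  exact (key y hy).symm.trans (key z hz)

lemma tadj_near {d L : ℕ} {u v : Tor d L} (h : tadj u v) :
    ∀ i, v i = u i - 1 ∨ v i = u i ∨ v i = u i + 1 := by
  obtain ⟨i0, hi0, hj⟩ := h
  intro i
  by_cases hii : i = i0
  · subst hii
    rcases hi0 with h1 | h1
    · exact Or.inr (Or.inr h1)
    · left; rw [h1]; ring
  · exact Or.inr (Or.inl (hj i hii).symm)

lemma mem_tbox_near {d L R : ℕ} (hR : 1 ≤ R) {u x : Tor d L}
    (hx : ∀ i, x i = u i - 1 ∨ x i = u i ∨ x i = u i + 1) :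
    x ∈ tbox (fun i => u i - 1) (2 * R + 1) := by
  intro i
  rcases hx i with h | h | h
  · exact ⟨0, by omega, by simpa using h⟩
  · exact ⟨1, by omega, by rw [h]; push_cast; ring⟩
  · exact ⟨2, by omega, by rw [h]; push_cast; ring⟩

lemma key_T {d L R : ℕ} {S : Type*} (hR : 1 ≤ R) (σ : Tor d L → S) {u v : Tor d L}
    (hu : u ∉ interior' tadj (BRT R σ)) (huv : tadj u v) : σ u = σ v := by
  by_contra hne
  set a : Tor d L := fun i => u i - 1 with ha
  have hub : u ∈ tbox a (2 * R + 1) :=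
    mem_tbox_near hR (fun i => Or.inr (Or.inl rfl))
  have hvb : v ∈ tbox a (2 * R + 1) := mem_tbox_near hR (tadj_near huv)
  have hnc : ¬ constOn σ (tbox a (2 * R + 1)) := fun h => hne (h u hub v hvb)
  have huB : u ∈ BRT R σ := ⟨a, hub, hnc⟩
  have hring : u ∈ ringBd tadj (BRT R σ) := by
    by_contra h; exact hu ⟨huB, h⟩
  obtain ⟨-, w, hwB, huw⟩ := hring
  exact hwB ⟨a, mem_tbox_near hR (tadj_near huw), hnc⟩

lemma adjZ_near {d : ℕ} {u v : Site d} (h : adjZ u v) :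
    ∀ i, u i - 1 ≤ v i ∧ v i ≤ u i + 1 := by
  intro i
  have h' : (∑ j, (u j - v j).natAbs) = 1 := h
  have hle : (u i - v i).natAbs ≤ ∑ j, (u j - v j).natAbs :=
    Finset.single_le_sum (f := fun j => (u j - v j).natAbs) (fun j _ => Nat.zero_le _) (Finset.mem_univ i)
  omega

lemma mem_boxZ_near {d R : ℕ} (hR : 1 ≤ R) {u x : Site d}
    (hx : ∀ i, u i - 1 ≤ x i ∧ x i ≤ u i + 1) :
    x ∈ boxZ (fun i => u i - 1) (2 * R + 1) := by
  intro i
  have h1 := hx i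
  have h2 : ((2 * R + 1 : ℕ) : ℤ) = 2 * (R : ℤ) + 1 := by push_cast; ring
  show u i - 1 ≤ x i ∧ x i < u i - 1 + ((2 * R + 1 : ℕ) : ℤ)
  omega

lemma key_Z {d R : ℕ} {S : Type*} (hR : 1 ≤ R) (σ : Site d → S) {u v : Site d}
    (hu : u ∉ interior' adjZ (BRZ R σ)) (huv : adjZ u v) : σ u = σ v := by
  by_contra hne
  set a : Site d := fun i => u i - 1 with ha
  have hub : u ∈ boxZ a (2 * R + 1) := mem_boxZ_near hR (fun i => by omega)
  have hvb : v ∈ boxZ a (2 * R + 1) := mem_boxZ_near hR (adjZ_near huv)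
  have hnc : ¬ constOn σ (boxZ a (2 * R + 1)) := fun h => hne (h u hub v hvb)
  have huB : u ∈ BRZ R σ := ⟨a, hub, hnc⟩
  have hring : u ∈ ringBd adjZ (BRZ R σ) := by
    by_contra h; exact hu ⟨huB, h⟩
  obtain ⟨-, w, hwB, huw⟩ := hring
  exact hwB ⟨a, mem_boxZ_near hR (adjZ_near huw), hnc⟩

/-- **Lemma 3.3** (constancy of spin on components of the complement).
If `(Λ, σ)` is a contour or a contour network on `T_L` and `C` is a connected
component of `T_L ∖ Λ°`, then `σ` is constant on `C`;  likewise for contours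
on `ℤ^d` and connected components of `ℤ^d ∖ Λ°`. -/
theorem spin_constant_on_complement_components
    {d L R : ℕ} {S : Type*} (hd : 2 ≤ d) (hR : 1 ≤ R) (hL : 2 * R + 1 ≤ L) :
    (∀ Y : TContour d L S R, ∀ C : Set (Tor d L),
        IsCompOf tadj C (interior' tadj Y.supp)ᶜ → constOn Y.conf C) ∧
    (∀ N : TNetwork d L S R, ∀ C : Set (Tor d L),
        IsCompOf tadj C (interior' tadj N.supp)ᶜ → constOn N.conf C) ∧
    (∀ Y : ZContour d S R, ∀ C : Set (Site d),
        IsCompOf adjZ C (interior' adjZ Y.supp)ᶜ → constOn Y.conf C) := by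
  refine ⟨?_, ?_, ?_⟩
  · intro Y C hC
    refine constOn_comp_aux (fun u v hu huv => ?_) hC
    exact key_T hR Y.conf (by rw [Y.br]; exact hu) huv
  · intro N C hC
    refine constOn_comp_aux (fun u v hu huv => ?_) hC
    exact key_T hR N.conf (by rw [N.br]; exact hu) huv
  · intro Y C hC
    refine constOn_comp_aux (fun u v hu huv => ?_) hC
    exact key_Z hR Y.conf (by rw [Y.br]; exact hu) huv
end
end

section
/- Lemma 3.5 (trichotomy for components of the R-boundary). Let R ≥ 1 and fix L > 2R+1. Let σ be a spin configuration on T_L, let Λ be either the vertex set of a component of the graph G_R(σ) with diameter less than L/2 or the union of the vertex sets of all components with diameter at least L/2, and let Λ' be of the same form with Λ' ≠ Λ. Then exactly one of the following holds: (1) Λ ∪ Int Λ ⊂ Int Λ' and Λ' ∪ Ext Λ' ⊂ Ext Λ; or (2) Λ' ∪ Int Λ' ⊂ Int Λ and Λ ∪ Ext Λ ⊂ Ext Λ'; or (3) Λ ∪ Int Λ ⊂ Ext Λ' and Λ' ∪ Int Λ' ⊂ Ext Λ. -/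
open scoped BigOperators Classical
noncomputable section

variable {d L R : ℕ} {S : Type*}

/-- The vertex set of the component of the graph `G_R(σ)` containing `x`. -/
def gcompT (R : ℕ) (σ : Tor d L → S) (x : Tor d L) : Set (Tor d L) :=
  compOf (gadjT R σ) (BRT R σ) x

/-- `Λ` is the vertex set of a component of `G_R(σ)` of diameter less than `L/2`. -/
def IsSmallCompSet (R : ℕ) (σ : Tor d L → S) (Λ : Set (Tor d L)) : Prop :=
  (∃ x ∈ BRT R σ, Λ = gcompT R σ x) ∧ 2 * tdiam Λ < L

/-- The union of the vertex sets of all components of `G_R(σ)` of diameter at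
least `L/2`. -/
def bigUnion (R : ℕ) (σ : Tor d L → S) : Set (Tor d L) :=
  {x | x ∈ BRT R σ ∧ L ≤ 2 * tdiam (gcompT R σ x)}

/-! A connected set `Λ` of diameter `< L/2` lies in a box whose complement is connected
(as `d ≥ 2`) and holds more than half of the torus, so `tExt Λ` is the unique component of
`Λᶜ` with more than `L^d/2` sites, and any two such exteriors meet. Two distinct components
of `G_R(σ)` are disjoint and `tadj`-connected, so each lies in the exterior or in the
interior of the other. Of the four cases, three are the alternatives of the trichotomy; in
the fourth, mutual interiority, the two exteriors would coincide, which is impossible. The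
union of the large components has empty exterior and, being too wide for the box of a small
component, lies in its exterior. -/

section Paths

variable {X : Type*} {adj : X → X → Prop} {A B : Set X} {x y z : X}

lemma pathIn.mono (h : A ⊆ B) (hp : pathIn adj A x y) : pathIn adj B x y :=
  Relation.ReflTransGen.mono (fun _ _ ⟨huv, hu, hv⟩ => ⟨huv, h hu, h hv⟩) _ _ hp

lemma pathIn.trans (h₁ : pathIn adj A x y) (h₂ : pathIn adj A y z) : pathIn adj A x z :=
  Relation.ReflTransGen.trans h₁ h₂

lemma pathIn.symm (hs : ∀ u v, adj u v → adj v u) (h : pathIn adj A x y) :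
    pathIn adj A y x := by
  induction h with
  | refl => exact .refl
  | tail _ huv ih => exact .head ⟨hs _ _ huv.1, huv.2.2, huv.2.1⟩ ih

lemma pathIn.mem_right (hx : x ∈ A) (h : pathIn adj A x y) : y ∈ A := by
  induction h with
  | refl => exact hx
  | tail _ huv _ => exact huv.2.2

lemma mem_compOf_self : x ∈ compOf adj A x := Relation.ReflTransGen.refl

lemma compOf_subset (hx : x ∈ A) : compOf adj A x ⊆ A := fun _ h => h.mem_right hx

lemma compOf_eq_of_mem (hs : ∀ u v, adj u v → adj v u) (hy : y ∈ compOf adj A x) :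
    compOf adj A y = compOf adj A x :=
  Set.ext fun _ => ⟨hy.trans, (hy.symm hs).trans⟩

lemma compOf_eq_of_mem_of_mem (hs : ∀ u v, adj u v → adj v u) (hx : z ∈ compOf adj A x)
    (hy : z ∈ compOf adj A y) : compOf adj A x = compOf adj A y :=
  (compOf_eq_of_mem hs hx).symm.trans (compOf_eq_of_mem hs hy)

lemma subset_compOf_of_connectedIn (hBA : B ⊆ A) (hB : connectedIn adj B) (hx : x ∈ B) :
    B ⊆ compOf adj A x :=
  fun y hy => (hB x hx y hy).mono hBA

lemma pathIn_compOf (hy : y ∈ compOf adj A x) : pathIn adj (compOf adj A x) x y := by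
  induction hy with
  | refl => exact .refl
  | tail hxu huv ih => exact .tail ih ⟨huv.1, hxu, hxu.tail huv⟩

lemma pathIn_of_compOf_subset (h : compOf adj A x ⊆ B) (hy : y ∈ compOf adj A x) :
    pathIn adj B x y :=
  (pathIn_compOf hy).mono h

lemma exists_adj_of_reflTransGen (h : Relation.ReflTransGen adj x y) (hx : x ∉ A)
    (hy : y ∈ A) : ∃ v ∈ compOf adj Aᶜ x, ∃ w ∈ A, adj v w := by
  induction h using Relation.ReflTransGen.head_induction_on with
  | refl => exact absurd hy hx
  | @head u v huv _ ih =>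
    by_cases hv : v ∈ A
    · exact ⟨u, mem_compOf_self, v, hv, huv⟩
    · obtain ⟨w, hw, w', hw', hww'⟩ := ih hv
      exact ⟨w, .head ⟨huv, hx, hv⟩ hw, w', hw', hww'⟩

end Paths

section TorusPaths

open Function

variable {d L : ℕ} {C : Set (Tor d L)} {x y : Tor d L}

lemma tadj_symm : ∀ x y : Tor d L, tadj x y → tadj y x :=
  fun _ _ ⟨i, hi, hj⟩ => ⟨i, hi.symm, fun j hji => (hj j hji).symm⟩

lemma pathIn_of_forall_update (hx : x ∈ C)
    (hstep : ∀ z ∈ C, ∀ k, z k ≠ y k → pathIn tadj C z (update z k (y k))) :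
    pathIn tadj C x y := by
  suffices ∀ s : Finset (Fin d), ∀ z ∈ C, (∀ k ∉ s, z k = y k) → pathIn tadj C z y from
    this Finset.univ x hx (by simp)
  intro s
  induction s using Finset.induction_on with
  | empty =>
    intro z _ hz
    obtain rfl : z = y := funext fun k => hz k (Finset.notMem_empty k)
    exact .refl
  | insert k s _ ih =>
    intro z hz hzs
    by_cases hk : z k = y k
    · refine ih z hz fun j hj => ?_
      by_cases hjk : j = k
      · exact hjk ▸ hk
      · exact hzs j (by simp [hjk, hj])
    · have hzk := hstep z hz k hk
      refine hzk.trans (ih _ (hzk.mem_right hz) fun j hj => ?_)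
      by_cases hjk : j = k
      · subst hjk; simp
      · rw [update_of_ne hjk]; exact hzs j (by simp [hjk, hj])

lemma update_mem_tbox {a z : Tor d L} {s j : ℕ} (hz : z ∈ tbox a s) (k : Fin d) (hj : j < s) :
    update z k (a k + j) ∈ tbox a s := by
  intro i
  by_cases hik : i = k
  · subst hik; exact ⟨j, hj, by simp⟩
  · simpa [update_of_ne hik] using hz i

lemma notMem_tbox_iff {a : Tor d L} {s : ℕ} :
    x ∉ tbox a s ↔ ∃ i, ∀ k < s, x i ≠ a i + k := by
  simp [tbox]

lemma pathIn_update_add_natCast (i : Fin d) (m : ℕ)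
    (h : ∀ j ≤ m, update x i (x i + j) ∈ C) : pathIn tadj C x (update x i (x i + m)) := by
  induction m with
  | zero =>
    simp only [Nat.cast_zero, add_zero, update_eq_self]
    exact .refl
  | succ m ih =>
    refine .tail (ih fun j hj => h j (by omega))
      ⟨⟨i, .inl ?_, fun j hj => ?_⟩, h m (by omega), h _ le_rfl⟩
    · simp only [update_self]; push_cast; ring
    · simp [update_of_ne hj]

lemma connectedIn_tbox (a : Tor d L) (s : ℕ) : connectedIn tadj (tbox a s) := by
  have to_corner : ∀ x ∈ tbox a s, pathIn tadj (tbox a s) x a := fun x hx =>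
    pathIn_of_forall_update hx fun z hz k _ => by
      obtain ⟨p, hp, hzk⟩ := hz k
      have h := pathIn_update_add_natCast (C := tbox a s) (x := update z k (a k)) k p
        fun j hj => by simpa using update_mem_tbox hz k (j := j) (by omega)
      simpa [← hzk] using h.symm tadj_symm
  exact fun x hx y hy => (to_corner x hx).trans ((to_corner y hy).symm tadj_symm)

variable [NeZero L]

lemma pathIn_update_of_forall (i : Fin d) (c : ZMod L) (h : ∀ v, update x i v ∈ C) :
    pathIn tadj C x (update x i c) := by
  simpa [ZMod.natCast_zmod_val] using
    pathIn_update_add_natCast (C := C) (x := x) i (c - x i).val fun _ _ => h _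

lemma reflTransGen_tadj (x y : Tor d L) : Relation.ReflTransGen tadj x y :=
  Relation.ReflTransGen.mono (fun _ _ h => h.1) _ _ <|
    pathIn_of_forall_update (C := Set.univ) trivial fun _ _ k _ =>
      pathIn_update_of_forall k _ fun _ => trivial

lemma connectedIn_compl_tbox (hd : 2 ≤ d) (a : Tor d L) {s : ℕ} (hs : s < L) :
    connectedIn tadj (tbox a s)ᶜ := by
  have : Nontrivial (Fin d) := Fin.nontrivial_iff_two_le.2 hd
  set c : Tor d L := fun i => a i + s
  have hc : ∀ i, ∀ k < s, c i ≠ a i + k := fun i k hk h => by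
    have := congrArg ZMod.val (add_left_cancel h)
    rw [ZMod.val_natCast_of_lt hs, ZMod.val_natCast_of_lt (hk.trans hs)] at this
    omega
  -- Move the coordinates other than a bad one `i` of `x` to those of `c`, then coordinate `i`,
  -- along which any other coordinate of `c` keeps the path outside the box.
  have to_c : ∀ x ∈ (tbox a s)ᶜ, pathIn tadj (tbox a s)ᶜ x c := by
    intro x hx
    obtain ⟨i, hi⟩ := notMem_tbox_iff.1 hx
    have hslab : {z : Tor d L | z i = x i} ⊆ (tbox a s)ᶜ :=
      fun z hz => notMem_tbox_iff.2 ⟨i, fun k hk => hz ▸ hi k hk⟩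
    have h₁ : pathIn tadj {z | z i = x i} x (update c i (x i)) :=
      pathIn_of_forall_update rfl fun z hz k hk => pathIn_update_of_forall k _ fun v => by
        have hki : k ≠ i := by rintro rfl; simp [hz.out] at hk
        simpa [update_of_ne hki.symm] using hz
    obtain ⟨j, hji⟩ := exists_ne i
    have h₂ : pathIn tadj (tbox a s)ᶜ (update c i (x i)) c := by
      simpa using pathIn_update_of_forall (C := (tbox a s)ᶜ) (x := update c i (x i)) i (c i)
        fun v => notMem_tbox_iff.2 ⟨j, by simpa [update_of_ne hji] using hc j⟩
    exact (h₁.mono hslab).trans h₂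
  exact fun x hx y hy => (to_c x hx).trans ((to_c y hy).symm tadj_symm)

end TorusPaths

section Counting

variable {d L : ℕ}

lemma ncard_tbox_le (a : Tor d L) (s : ℕ) : (tbox a s).ncard ≤ s ^ d := by
  have hsub : tbox a s ⊆ Set.range fun k : Fin d → Fin s => fun i => a i + (k i : ℕ) :=
    fun x hx => by
      choose k hk hxk using hx
      exact ⟨fun i => ⟨k i, hk i⟩, funext fun i => (hxk i).symm⟩
  calc (tbox a s).ncard ≤ Nat.card (Set.range _) := Set.ncard_le_ncard hsub
    _ ≤ Nat.card (Fin d → Fin s) := Finite.card_range_le _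
    _ = s ^ d := by simp

lemma two_mul_pow_lt_pow {s : ℕ} (hd : d ≠ 0) (h : 2 * s < L) : 2 * s ^ d < L ^ d :=
  calc 2 * s ^ d ≤ 2 ^ d * s ^ d := Nat.mul_le_mul_right _ (Nat.le_self_pow hd 2)
    _ = (2 * s) ^ d := (Nat.mul_pow 2 s d).symm
    _ < L ^ d := Nat.pow_lt_pow_left h hd

lemma inter_nonempty_of_lt_two_mul_ncard {α : Type*} [Finite α] {A B : Set α}
    (hA : Nat.card α < 2 * A.ncard) (hB : Nat.card α < 2 * B.ncard) : (A ∩ B).Nonempty := by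
  by_contra h
  have hunion := Set.ncard_union_eq (Set.disjoint_iff_inter_eq_empty.2
    (Set.not_nonempty_iff_eq_empty.1 h))
  have := Set.ncard_le_card (A ∪ B)
  omega

variable [NeZero L]

lemma card_tor : Nat.card (Tor d L) = L ^ d := by simp

lemma lt_two_mul_ncard_compl_tbox (hd : d ≠ 0) (a : Tor d L) {s : ℕ} (hs : 2 * s < L) :
    L ^ d < 2 * (tbox a s)ᶜ.ncard := by
  have hsum := Set.ncard_add_ncard_compl (tbox a s)
  have := ncard_tbox_le a s
  have := two_mul_pow_lt_pow hd hs
  rw [card_tor] at hsum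
  omega

end Counting

section Exterior

variable {d L : ℕ} {Λ Λ' K : Set (Tor d L)} {x y : Tor d L}

/-- The sets whose exterior `tExt` is the big component of the complement rather than `∅`. -/
def IsSmallConnected (Λ : Set (Tor d L)) : Prop :=
  connectedIn tadj Λ ∧ Λ.Nonempty ∧ 2 * tdiam Λ < L

lemma tExt_of_isSmallConnected (h : IsSmallConnected Λ) :
    tExt Λ = {x | x ∉ Λ ∧ L ^ d < 2 * (compOf tadj Λᶜ x).ncard} :=
  if_pos h

lemma tExt_of_not_isSmallConnected (h : ¬ IsSmallConnected Λ) : tExt Λ = ∅ :=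
  if_neg h

lemma tExt_subset_compl : tExt Λ ⊆ Λᶜ := by
  unfold tExt
  split_ifs
  exacts [fun _ hx => hx.1, Set.empty_subset _]

lemma union_tInt : Λ ∪ tInt Λ = (tExt Λ)ᶜ := by
  ext x
  by_cases hx : x ∈ Λ
  · simpa [tInt, hx] using fun h => tExt_subset_compl h hx
  · simp [tInt, hx]

lemma mem_tExt_of_mem_compOf (hx : x ∈ tExt Λ) (hy : y ∈ compOf tadj Λᶜ x) :
    y ∈ tExt Λ := by
  unfold tExt at hx ⊢
  split_ifs at hx ⊢
  · exact ⟨compOf_subset hx.1 hy, compOf_eq_of_mem tadj_symm hy ▸ hx.2⟩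
  · exact hx

lemma subset_tExt_of_connectedIn (hK : connectedIn tadj K) (hKΛ : K ⊆ Λᶜ) (hx : x ∈ K)
    (hxΛ : x ∈ tExt Λ) : K ⊆ tExt Λ :=
  fun _ hy => mem_tExt_of_mem_compOf hxΛ (subset_compOf_of_connectedIn hKΛ hK hx hy)

lemma subset_tExt_or_subset_tInt (hK : connectedIn tadj K) (hKΛ : K ⊆ Λᶜ) :
    K ⊆ tExt Λ ∨ K ⊆ tInt Λ := by
  by_cases h : ∃ x ∈ K, x ∈ tExt Λ
  · obtain ⟨x, hx, hxΛ⟩ := h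
    exact .inl (subset_tExt_of_connectedIn hK hKΛ hx hxΛ)
  · push Not at h
    exact .inr fun y hy => by simp [tInt, hKΛ hy, h y hy]

lemma tdiam_tbox_le (a : Tor d L) (s : ℕ) : tdiam (tbox a s) ≤ s :=
  Nat.sInf_le ⟨a, subset_rfl⟩

variable [NeZero L]

lemma exists_subset_tbox_tdiam (Λ : Set (Tor d L)) : ∃ a, Λ ⊆ tbox a (tdiam Λ) := by
  have hL : L ∈ {s | ∃ a : Tor d L, Λ ⊆ tbox a s} := ⟨0, fun x _ i =>
    ⟨(x i).val, ZMod.val_lt _, by simp⟩⟩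
  exact Nat.sInf_mem ⟨L, hL⟩

lemma tdiam_mono (h : Λ ⊆ Λ') : tdiam Λ ≤ tdiam Λ' :=
  let ⟨a, ha⟩ := exists_subset_tbox_tdiam Λ'
  Nat.sInf_le ⟨a, h.trans ha⟩

lemma compl_tbox_subset_tExt (hd : 2 ≤ d) (hΛ : IsSmallConnected Λ) {a : Tor d L}
    (ha : Λ ⊆ tbox a (tdiam Λ)) : (tbox a (tdiam Λ))ᶜ ⊆ tExt Λ := by
  intro e he
  rw [tExt_of_isSmallConnected hΛ]
  refine ⟨fun h => he (ha h), ?_⟩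
  have hsub : (tbox a (tdiam Λ))ᶜ ⊆ compOf tadj Λᶜ e := subset_compOf_of_connectedIn
    (Set.compl_subset_compl.2 ha) (connectedIn_compl_tbox hd a (by have := hΛ.2.2; omega)) he
  have := Set.ncard_le_ncard hsub
  have := lt_two_mul_ncard_compl_tbox (by omega) a hΛ.2.2
  omega

lemma lt_two_mul_ncard_tExt (hd : 2 ≤ d) (hΛ : IsSmallConnected Λ) :
    L ^ d < 2 * (tExt Λ).ncard := by
  obtain ⟨a, ha⟩ := exists_subset_tbox_tdiam Λ
  have := Set.ncard_le_ncard (compl_tbox_subset_tExt hd hΛ ha)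
  have := lt_two_mul_ncard_compl_tbox (by omega) a hΛ.2.2
  omega

lemma tExt_inter_tExt_nonempty (hd : 2 ≤ d) (hΛ : IsSmallConnected Λ)
    (hΛ' : IsSmallConnected Λ') : (tExt Λ ∩ tExt Λ').Nonempty :=
  inter_nonempty_of_lt_two_mul_ncard (by rw [card_tor]; exact lt_two_mul_ncard_tExt hd hΛ)
    (by rw [card_tor]; exact lt_two_mul_ncard_tExt hd hΛ')

/-- Two components of `Λᶜ` with more than half of the sites each must meet. -/
lemma tExt_subset_compOf (hx : x ∈ tExt Λ) : tExt Λ ⊆ compOf tadj Λᶜ x := by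
  intro y hy
  have hΛ : IsSmallConnected Λ := by
    by_contra h
    rw [tExt_of_not_isSmallConnected h] at hx
    exact hx
  rw [tExt_of_isSmallConnected hΛ] at hx hy
  obtain ⟨z, hzx, hzy⟩ := inter_nonempty_of_lt_two_mul_ncard
    (A := compOf tadj Λᶜ x) (B := compOf tadj Λᶜ y) (by rw [card_tor]; exact hx.2)
    (by rw [card_tor]; exact hy.2)
  rw [compOf_eq_of_mem_of_mem tadj_symm hzx hzy]
  exact mem_compOf_self

lemma connectedIn_tExt : connectedIn tadj (tExt Λ) := fun _ hx _ hy =>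
  (pathIn_compOf (tExt_subset_compOf hx hy)).mono fun _ hz => mem_tExt_of_mem_compOf hx hz

lemma tExt_subset_tExt_of_subset_tInt (hd : 2 ≤ d) (hΛ : IsSmallConnected Λ)
    (hΛ' : IsSmallConnected Λ') (h : Λ ⊆ tInt Λ') : tExt Λ' ⊆ tExt Λ :=
  let ⟨_, he, he'⟩ := tExt_inter_tExt_nonempty hd hΛ hΛ'
  subset_tExt_of_connectedIn connectedIn_tExt (fun _ hy hyΛ => h hyΛ (.inr hy)) he' he

lemma connectedIn_compl_tExt (hΛ : IsSmallConnected Λ) : connectedIn tadj (tExt Λ)ᶜ := by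
  obtain ⟨w, hw⟩ := hΛ.2.1
  have hΛsub : Λ ⊆ (tExt Λ)ᶜ := fun x hx he => tExt_subset_compl he hx
  suffices ∀ u ∈ (tExt Λ)ᶜ, pathIn tadj (tExt Λ)ᶜ u w from
    fun x hx y hy => (this x hx).trans ((this y hy).symm tadj_symm)
  intro u hu
  by_cases huΛ : u ∈ Λ
  · exact (hΛ.1 u huΛ w hw).mono hΛsub
  obtain ⟨v, hv, w', hw', hvw'⟩ := exists_adj_of_reflTransGen (reflTransGen_tadj u w) huΛ hw
  have hcomp : compOf tadj Λᶜ u ⊆ (tExt Λ)ᶜ := fun y hy hye =>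
    hu (mem_tExt_of_mem_compOf hye (compOf_eq_of_mem tadj_symm hy ▸ mem_compOf_self))
  exact ((pathIn_of_compOf_subset hcomp hv).tail ⟨hvw', hcomp hv, hΛsub hw'⟩).trans
    ((hΛ.1 w' hw' w hw).mono hΛsub)

lemma compl_tExt_subset_tExt (hΛ : IsSmallConnected Λ) (h : Λ ⊆ tExt Λ')
    (h' : Λ' ⊆ tExt Λ) : (tExt Λ)ᶜ ⊆ tExt Λ' :=
  let ⟨_, hw⟩ := hΛ.2.1
  subset_tExt_of_connectedIn (connectedIn_compl_tExt hΛ) (fun _ hy hyΛ' => hy (h' hyΛ'))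
    (fun he => tExt_subset_compl he hw) (h hw)

lemma not_subset_tInt_of_subset_tInt (hd : 2 ≤ d) (hΛ : IsSmallConnected Λ)
    (hΛ' : IsSmallConnected Λ') (hdisj : Disjoint Λ Λ') (h' : Λ' ⊆ tInt Λ) :
    ¬ Λ ⊆ tInt Λ' := by
  intro h
  have hE : tExt Λ' = tExt Λ := (tExt_subset_tExt_of_subset_tInt hd hΛ hΛ' h).antisymm
    (tExt_subset_tExt_of_subset_tInt hd hΛ' hΛ h')
  -- `tExt Λ` is closed under adjacency: stepping into `Λ` would leave `tExt Λ' = tExt Λ`.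
  have hclosed : ∀ u v, tadj u v → u ∈ tExt Λ → v ∈ tExt Λ := by
    intro u v huv hu
    by_cases hv : v ∈ Λ
    · rw [← hE] at hu ⊢
      exact mem_tExt_of_mem_compOf hu
        (.single ⟨huv, tExt_subset_compl hu, hdisj.subset_compl_right hv⟩)
    · exact mem_tExt_of_mem_compOf hu (.single ⟨huv, tExt_subset_compl hu, hv⟩)
  obtain ⟨e, he, -⟩ := tExt_inter_tExt_nonempty hd hΛ hΛ
  obtain ⟨w, hw⟩ := hΛ.2.1
  have hreach : ∀ v, Relation.ReflTransGen tadj e v → v ∈ tExt Λ := fun v hv => by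
    induction hv with
    | refl => exact he
    | tail _ huv ih => exact hclosed _ _ huv ih
  exact tExt_subset_compl (hreach w (reflTransGen_tadj e w)) hw

end Exterior

section Nesting

variable {d L : ℕ} {Λ Λ' : Set (Tor d L)}

/-- Alternative (1) of the trichotomy; alternative (2) is `Nested Λ' Λ`. -/
def Nested (Λ Λ' : Set (Tor d L)) : Prop :=
  Λ ∪ tInt Λ ⊆ tInt Λ' ∧ Λ' ∪ tExt Λ' ⊆ tExt Λ

/-- Alternative (3) of the trichotomy. -/
def Separated (Λ Λ' : Set (Tor d L)) : Prop :=
  Λ ∪ tInt Λ ⊆ tExt Λ' ∧ Λ' ∪ tInt Λ' ⊆ tExt Λ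

lemma nested_of_union_tExt_subset (h : Λ' ∪ tExt Λ' ⊆ tExt Λ) : Nested Λ Λ' :=
  ⟨by rw [union_tInt]; exact Set.compl_subset_compl.2 h, h⟩

lemma separated_of_compl_tExt_subset (h : (tExt Λ)ᶜ ⊆ tExt Λ') : Separated Λ Λ' :=
  ⟨by rwa [union_tInt], by rw [union_tInt]; exact Set.compl_subset_comm.1 h⟩

lemma Separated.symm (h : Separated Λ Λ') : Separated Λ' Λ := ⟨h.2, h.1⟩

lemma Nested.right_eq_empty (h : Nested Λ Λ') (h' : Nested Λ' Λ) : Λ' = ∅ :=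
  Set.eq_empty_of_forall_notMem fun _ hx => tExt_subset_compl (h'.2 (.inr (h.2 (.inl hx)))) hx

lemma tExt_ne_univ : tExt Λ ≠ Set.univ := by
  intro h
  have hΛ : Λ = ∅ :=
    Set.eq_empty_of_forall_notMem fun x hx => tExt_subset_compl (h ▸ Set.mem_univ x) hx
  subst hΛ
  rw [tExt_of_not_isSmallConnected fun hsmall => Set.not_nonempty_empty hsmall.2.1] at h
  exact Set.empty_ne_univ h

lemma Nested.not_separated (h : Nested Λ Λ') : ¬ Separated Λ Λ' := fun h' =>
  tExt_ne_univ (Set.compl_empty_iff.1 (Set.eq_empty_of_forall_notMem fun x hx => by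
    rw [← union_tInt] at hx
    exact h.1 hx (.inr (h'.1 hx))))

variable [NeZero L]

lemma nested_or_nested_or_separated (hd : 2 ≤ d) (hΛ : IsSmallConnected Λ)
    (hΛ' : IsSmallConnected Λ') (hdisj : Disjoint Λ Λ') :
    Nested Λ Λ' ∨ Nested Λ' Λ ∨ Separated Λ Λ' := by
  rcases subset_tExt_or_subset_tInt hΛ.1 hdisj.subset_compl_right with h | h <;>
    rcases subset_tExt_or_subset_tInt hΛ'.1 hdisj.subset_compl_left with h' | h'
  · exact .inr (.inr (separated_of_compl_tExt_subset (compl_tExt_subset_tExt hΛ h h')))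
  · exact .inr (.inl (nested_of_union_tExt_subset
      (Set.union_subset h (tExt_subset_tExt_of_subset_tInt hd hΛ' hΛ h'))))
  · exact .inl (nested_of_union_tExt_subset
      (Set.union_subset h' (tExt_subset_tExt_of_subset_tInt hd hΛ hΛ' h)))
  · exact absurd h (not_subset_tInt_of_subset_tInt hd hΛ hΛ' hdisj h')

end Nesting

section Components

variable {d L R : ℕ} {S : Type*} {σ : Tor d L → S} {Λ Λ' : Set (Tor d L)} {x y : Tor d L}

lemma gadjT_symm : ∀ x y : Tor d L, gadjT R σ x y → gadjT R σ y x :=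
  fun _ _ ⟨hne, a, hx, hy, hbad⟩ => ⟨hne.symm, a, hy, hx, hbad⟩

lemma tbox_subset_gcompT {a : Tor d L} (hy : y ∈ gcompT R σ x) (hya : y ∈ tbox a (2 * R + 1))
    (hbad : ¬ constOn σ (tbox a (2 * R + 1))) : tbox a (2 * R + 1) ⊆ gcompT R σ x := by
  intro z hz
  by_cases hzy : z = y
  · exact hzy ▸ hy
  · exact hy.tail ⟨⟨Ne.symm hzy, a, hya, hz, hbad⟩, ⟨a, hya, hbad⟩, ⟨a, hz, hbad⟩⟩

lemma connectedIn_gcompT : connectedIn tadj (gcompT R σ x) := by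
  suffices ∀ y ∈ gcompT R σ x, pathIn tadj (gcompT R σ x) x y from
    fun y hy z hz => ((this y hy).symm tadj_symm).trans (this z hz)
  intro y hy
  induction hy with
  | refl => exact .refl
  | @tail u v hxu huv ih =>
    obtain ⟨-, a, hu, hv, hbad⟩ := huv.1
    exact ih.trans ((connectedIn_tbox a _ u hu v hv).mono (tbox_subset_gcompT hxu hu hbad))

lemma disjoint_gcompT (h : gcompT R σ x ≠ gcompT R σ y) :
    Disjoint (gcompT R σ x) (gcompT R σ y) :=
  Set.disjoint_left.2 fun _ hzx hzy => h (compOf_eq_of_mem_of_mem gadjT_symm hzx hzy)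

lemma IsSmallCompSet.isSmallConnected (h : IsSmallCompSet R σ Λ) : IsSmallConnected Λ := by
  obtain ⟨⟨x, -, rfl⟩, hsmall⟩ := h
  exact ⟨connectedIn_gcompT, ⟨x, mem_compOf_self⟩, hsmall⟩

lemma IsSmallCompSet.disjoint (h : IsSmallCompSet R σ Λ) (h' : IsSmallCompSet R σ Λ')
    (hne : Λ ≠ Λ') : Disjoint Λ Λ' := by
  obtain ⟨⟨x, -, rfl⟩, -⟩ := h
  obtain ⟨⟨y, -, rfl⟩, -⟩ := h'
  exact disjoint_gcompT hne

lemma gcompT_eq_of_mem (hy : y ∈ gcompT R σ x) : gcompT R σ y = gcompT R σ x :=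
  compOf_eq_of_mem gadjT_symm hy

lemma gcompT_subset_bigUnion (hx : x ∈ bigUnion R σ) : gcompT R σ x ⊆ bigUnion R σ :=
  fun _ hy => ⟨compOf_subset hx.1 hy, (gcompT_eq_of_mem hy).symm ▸ hx.2⟩

variable [NeZero L]

lemma tExt_bigUnion : tExt (bigUnion R σ) = ∅ :=
  tExt_of_not_isSmallConnected fun ⟨_, ⟨x, hx⟩, hsmall⟩ => by
    have := tdiam_mono (gcompT_subset_bigUnion hx)
    have := hx.2
    omega

lemma bigUnion_subset_tExt (hd : 2 ≤ d) (hΛ : IsSmallCompSet R σ Λ) :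
    bigUnion R σ ⊆ tExt Λ := by
  obtain ⟨a, ha⟩ := exists_subset_tbox_tdiam Λ
  rintro x ⟨-, hxbig⟩
  have hdisj : Disjoint (gcompT R σ x) Λ := by
    obtain ⟨⟨x₀, -, rfl⟩, hsmall⟩ := hΛ
    exact disjoint_gcompT fun h => by rw [h] at hxbig; omega
  obtain ⟨y, hy, hya⟩ := Set.not_subset.1 fun h : gcompT R σ x ⊆ tbox a (tdiam Λ) => by
    have := (tdiam_mono h).trans (tdiam_tbox_le a _)
    have := hΛ.2
    omega
  exact subset_tExt_of_connectedIn connectedIn_gcompT hdisj.subset_compl_right hy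
    (compl_tbox_subset_tExt hd hΛ.isSmallConnected ha hya) mem_compOf_self

lemma nested_bigUnion (hd : 2 ≤ d) (hΛ : IsSmallCompSet R σ Λ) : Nested Λ (bigUnion R σ) :=
  nested_of_union_tExt_subset (by
    rw [tExt_bigUnion, Set.union_empty]
    exact bigUnion_subset_tExt hd hΛ)

end Components

lemma exactly_one_of_or {p q r : Prop} (h : p ∨ q ∨ r) (hpq : ¬ (p ∧ q)) (hpr : ¬ (p ∧ r))
    (hqr : ¬ (q ∧ r)) :
    (p ∧ ¬ q ∧ ¬ r) ∨ (¬ p ∧ q ∧ ¬ r) ∨ (¬ p ∧ ¬ q ∧ r) := by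
  tauto

theorem component_trichotomy_general (hd : 2 ≤ d) (hL : 2 * R + 1 < L)
    (σ : Tor d L → S) (Λ Λ' : Set (Tor d L))
    (hΛ : IsSmallCompSet R σ Λ ∨ Λ = bigUnion R σ)
    (hΛ' : IsSmallCompSet R σ Λ' ∨ Λ' = bigUnion R σ)
    (hne : Λ ≠ Λ') :
    (((Λ ∪ tInt Λ ⊆ tInt Λ') ∧ (Λ' ∪ tExt Λ' ⊆ tExt Λ)) ∧
      ¬((Λ' ∪ tInt Λ' ⊆ tInt Λ) ∧ (Λ ∪ tExt Λ ⊆ tExt Λ')) ∧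
      ¬((Λ ∪ tInt Λ ⊆ tExt Λ') ∧ (Λ' ∪ tInt Λ' ⊆ tExt Λ))) ∨
    (¬((Λ ∪ tInt Λ ⊆ tInt Λ') ∧ (Λ' ∪ tExt Λ' ⊆ tExt Λ)) ∧
      ((Λ' ∪ tInt Λ' ⊆ tInt Λ) ∧ (Λ ∪ tExt Λ ⊆ tExt Λ')) ∧
      ¬((Λ ∪ tInt Λ ⊆ tExt Λ') ∧ (Λ' ∪ tInt Λ' ⊆ tExt Λ))) ∨
    (¬((Λ ∪ tInt Λ ⊆ tInt Λ') ∧ (Λ' ∪ tExt Λ' ⊆ tExt Λ)) ∧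
      ¬((Λ' ∪ tInt Λ' ⊆ tInt Λ) ∧ (Λ ∪ tExt Λ ⊆ tExt Λ')) ∧
      ((Λ ∪ tInt Λ ⊆ tExt Λ') ∧ (Λ' ∪ tInt Λ' ⊆ tExt Λ))) := by
  have : NeZero L := ⟨by omega⟩
  refine exactly_one_of_or (p := Nested Λ Λ') (q := Nested Λ' Λ) (r := Separated Λ Λ') ?_
    (fun h => hne ((h.2.right_eq_empty h.1).trans (h.1.right_eq_empty h.2).symm))
    (fun h => h.1.not_separated h.2) (fun h => h.1.not_separated h.2.symm)
  rcases hΛ with hΛ | rfl <;> rcases hΛ' with hΛ' | rfl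
  · exact nested_or_nested_or_separated hd hΛ.isSmallConnected hΛ'.isSmallConnected
      (hΛ.disjoint hΛ' hne)
  · exact .inl (nested_bigUnion hd hΛ)
  · exact .inr (.inl (nested_bigUnion hd hΛ'))
  · exact absurd rfl hne

/-- **Lemma 3.5** (trichotomy for components of the `R`-boundary).  For any two
distinct sets `Λ, Λ'` that are each either the vertex set of a small component of
`G_R(σ)` or the union of the vertex sets of all large components, exactly one of
the three nesting alternatives holds. -/
theorem component_trichotomy (hd : 2 ≤ d) (hR : 1 ≤ R) (hL : 2 * R + 1 < L)
    (σ : Tor d L → S) (Λ Λ' : Set (Tor d L))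
    (hΛ : IsSmallCompSet R σ Λ ∨ Λ = bigUnion R σ)
    (hΛ' : IsSmallCompSet R σ Λ' ∨ Λ' = bigUnion R σ)
    (hne : Λ ≠ Λ') :
    (((Λ ∪ tInt Λ ⊆ tInt Λ') ∧ (Λ' ∪ tExt Λ' ⊆ tExt Λ)) ∧
      ¬((Λ' ∪ tInt Λ' ⊆ tInt Λ) ∧ (Λ ∪ tExt Λ ⊆ tExt Λ')) ∧
      ¬((Λ ∪ tInt Λ ⊆ tExt Λ') ∧ (Λ' ∪ tInt Λ' ⊆ tExt Λ))) ∨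
    (¬((Λ ∪ tInt Λ ⊆ tInt Λ') ∧ (Λ' ∪ tExt Λ' ⊆ tExt Λ)) ∧
      ((Λ' ∪ tInt Λ' ⊆ tInt Λ) ∧ (Λ ∪ tExt Λ ⊆ tExt Λ')) ∧
      ¬((Λ ∪ tInt Λ ⊆ tExt Λ') ∧ (Λ' ∪ tInt Λ' ⊆ tExt Λ))) ∨
    (¬((Λ ∪ tInt Λ ⊆ tInt Λ') ∧ (Λ' ∪ tExt Λ' ⊆ tExt Λ)) ∧
      ¬((Λ' ∪ tInt Λ' ⊆ tInt Λ) ∧ (Λ ∪ tExt Λ ⊆ tExt Λ')) ∧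
      ((Λ ∪ tInt Λ ⊆ tExt Λ') ∧ (Λ' ∪ tInt Λ' ⊆ tExt Λ))) :=
  component_trichotomy_general hd hL σ Λ Λ' hΛ hΛ' hne
end
end

section
/- Lemma 3.7 (*-connectedness of the inner boundary). Let A ⊂ ℤ^d be a finite connected set whose complement ℤ^d ∖ A is connected. Then ∂(A^c) is *-connected: any two sites x, y ∈ ∂(A^c) can be joined by a path of sites lying in ∂(A^c) whose individual steps connect only pairs of sites of ℤ^d at Euclidean distance not exceeding √2. -/
/-!
Let `S` be the *-component of `x` in `∂(Aᶜ)` and mark, mod 2, the edges of `ℤ^d` joining `S`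
to `Aᶜ`. This 1-form is closed: the sites of `∂(Aᶜ)` at the corners of a unit square are
pairwise *-adjacent, so either no corner lies in `S`, and no edge of the square is marked, or
every boundary corner does, and the marked edges of the square are exactly those crossing
between `A` and `Aᶜ`, an even number. Closed forms on `ℤ^d` are exact, so the marking is the
coboundary of some `F : ℤ^d → ZMod 2`. As `A` and `Aᶜ` are connected and no marked edge lies
inside either, `F` is constant on each of them; the marked edge at `x` makes the two constants
differ, so for `y ∈ ∂(Aᶜ)` the edge from `y` to `Aᶜ` is marked as well, that is, `y ∈ S`.
-/

open scoped BigOperators Classical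
noncomputable section

/-- `∂(Aᶜ)`: the set of sites of `A` at distance one from the complement of `A`. -/
def innerBd {d : ℕ} (A : Set (Site d)) : Set (Site d) :=
  {x | x ∈ A ∧ ∃ y, y ∉ A ∧ adjZ x y}

section ClosedForm

variable {d : ℕ} {G : Type*} [AddCommGroup G]

/-- `ω u k` is the value of a 1-form on the edge from `u` to `u + eₖ`, `eₖ = Pi.single k 1`;
it is closed when it sums to zero around every unit square. -/
def IsClosedForm (ω : Site d → Fin d → G) : Prop :=
  ∀ b i j, ω b i + ω (b + Pi.single i 1) j = ω b j + ω (b + Pi.single j 1) i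

/-- The steps `(u, a) ↦ (u + eₖ, a + ω u k)` commute exactly when `ω` is closed, so they
generate an action of `ℤ^d` on `ℤ^d × G`; a potential of `ω` is read off the orbit of
`(0, 0)`. -/
def twistedStep (ω : Site d → Fin d → G) (k : Fin d) : Equiv.Perm (Site d × G) where
  toFun p := (p.1 + Pi.single k 1, p.2 + ω p.1 k)
  invFun p := (p.1 - Pi.single k 1, p.2 - ω (p.1 - Pi.single k 1) k)
  left_inv p := by simp
  right_inv p := by simp

lemma fst_twistedStep (ω : Site d → Fin d → G) (k : Fin d) (p : Site d × G) :
    (twistedStep ω k p).1 = p.1 + Pi.single k 1 := rfl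

lemma fst_twistedStep_symm (ω : Site d → Fin d → G) (k : Fin d) (p : Site d × G) :
    ((twistedStep ω k).symm p).1 = p.1 - Pi.single k 1 := rfl

lemma fst_twistedStep_zpow (ω : Site d → Fin d → G) (k : Fin d) (m : ℤ) (p : Site d × G) :
    ((twistedStep ω k ^ m) p).1 = p.1 + Pi.single k m := by
  induction m using Int.induction_on generalizing p with
  | zero => simp
  | succ n ih =>
    rw [zpow_add_one, Equiv.Perm.mul_apply, ih, fst_twistedStep, Pi.single_add]
    abel
  | pred n ih =>
    rw [zpow_sub_one, Equiv.Perm.mul_apply, ih, Equiv.Perm.inv_def, fst_twistedStep_symm,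
      Pi.single_sub]
    abel

variable {ω : Site d → Fin d → G} (hω : IsClosedForm ω)
include hω

lemma IsClosedForm.commute_twistedStep (i j : Fin d) :
    Commute (twistedStep ω i) (twistedStep ω j) :=
  Equiv.ext fun p => Prod.ext (add_right_comm _ _ _) <| by
    simp only [twistedStep, Equiv.Perm.coe_mul, Equiv.coe_fn_mk, Function.comp_apply, add_assoc,
      hω p.1 j i]

lemma IsClosedForm.pairwise_addCommute_zmultiples :
    Pairwise fun i j => ∀ m n : ℤ,
      AddCommute (zmultiplesHom _ (Additive.ofMul (twistedStep ω i)) m)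
        (zmultiplesHom _ (Additive.ofMul (twistedStep ω j)) n) := fun i j _ m n => by
  simp only [zmultiplesHom_apply]
  exact AddCommute.zsmul_zsmul (a := Additive.ofMul (twistedStep ω i))
    (hω.commute_twistedStep i j) m n

def IsClosedForm.twistedAction : Site d →+ Additive (Equiv.Perm (Site d × G)) :=
  AddMonoidHom.noncommPiCoprod (fun k => zmultiplesHom _ (Additive.ofMul (twistedStep ω k)))
    hω.pairwise_addCommute_zmultiples

lemma IsClosedForm.twistedAction_single (k : Fin d) (m : ℤ) :
    (hω.twistedAction (Pi.single k m)).toMul = twistedStep ω k ^ m := by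
  rw [twistedAction, AddMonoidHom.noncommPiCoprod_single, zmultiplesHom_apply, toMul_zsmul,
    toMul_ofMul]

lemma IsClosedForm.fst_twistedAction (s : Site d) (p : Site d × G) :
    ((hω.twistedAction s).toMul p).1 = p.1 + s := by
  induction s using Pi.single_induction generalizing p with
  | zero => simp
  | add s t hs ht => simp [toMul_add, hs, ht, add_comm s t, add_assoc]
  | single k m => rw [hω.twistedAction_single, fst_twistedStep_zpow]

theorem IsClosedForm.exists_potential :
    ∃ F : Site d → G, ∀ u k, F (u + Pi.single k 1) = F u + ω u k := by
  refine ⟨fun s => ((hω.twistedAction s).toMul (0, 0)).2, fun u k => ?_⟩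
  dsimp only
  rw [add_comm u, map_add, toMul_add, Equiv.Perm.mul_apply, hω.twistedAction_single, zpow_one]
  simp [twistedStep, hω.fst_twistedAction]

end ClosedForm

section Geometry

variable {d : ℕ}

lemma exists_eq_single_of_sum_natAbs_eq_one {f : Site d} (h : ∑ i, (f i).natAbs = 1) :
    ∃ k, f = Pi.single k 1 ∨ f = -Pi.single k 1 := by
  obtain ⟨k, -, hk⟩ := Finset.exists_ne_zero_of_sum_ne_zero (h.trans_ne one_ne_zero)
  rw [← Finset.add_sum_erase _ _ (Finset.mem_univ k)] at h
  have hrest : ∑ i ∈ Finset.univ.erase k, (f i).natAbs = 0 := by omega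
  have hf : f = Pi.single k (f k) := funext fun i => by
    by_cases hi : i = k
    · subst hi; simp
    · simpa [hi] using Finset.sum_eq_zero_iff.mp hrest i (Finset.mem_erase.mpr ⟨hi, by simp⟩)
  refine ⟨k, ?_⟩
  rcases Int.natAbs_eq (f k) with hfk | hfk <;> rw [hf, hfk] <;>
    simp [show (f k).natAbs = 1 by omega, Pi.single_neg]

lemma adjZ_comm {u v : Site d} : adjZ u v ↔ adjZ v u := by
  simp only [adjZ, ← Int.natAbs_neg (u _ - v _), neg_sub]

lemma adjZ_add_single (u : Site d) (k : Fin d) : adjZ u (u + Pi.single k 1) := by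
  simp [adjZ, Pi.single_apply, apply_ite]

lemma exists_eq_add_single_of_adjZ {u v : Site d} (h : adjZ u v) :
    ∃ k, v = u + Pi.single k 1 ∨ u = v + Pi.single k 1 := by
  obtain ⟨k, hk | hk⟩ := exists_eq_single_of_sum_natAbs_eq_one (f := u - v) h
  · exact ⟨k, Or.inr (by rw [← hk]; abel)⟩
  · exact ⟨k, Or.inl (by rw [← neg_eq_iff_eq_neg.mpr hk]; abel)⟩

lemma sum_sq_sub_le_of_mem_box {b w p q : Site d} (hw : ∀ k, w k = 0 ∨ w k = 1)
    (hp : ∀ k, b k ≤ p k ∧ p k ≤ b k + w k) (hq : ∀ k, b k ≤ q k ∧ q k ≤ b k + w k) :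
    ∑ k, (p k - q k) ^ 2 ≤ ∑ k, w k :=
  Finset.sum_le_sum fun k _ => by
    obtain ⟨hp₀, hp₁⟩ := hp k
    obtain ⟨hq₀, hq₁⟩ := hq k
    rcases hw k with h | h <;> rw [h] at hp₁ hq₁ ⊢ <;> nlinarith

def unitSquare (b : Site d) (i j : Fin d) : Set (Site d) :=
  {b, b + Pi.single i 1, b + Pi.single j 1, b + Pi.single i 1 + Pi.single j 1}

lemma sum_sq_sub_le_two_of_mem_unitSquare {b p q : Site d} {i j : Fin d} (hij : i ≠ j)
    (hp : p ∈ unitSquare b i j) (hq : q ∈ unitSquare b i j) : ∑ k, (p k - q k) ^ 2 ≤ 2 := by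
  set w : Site d := Pi.single i 1 + Pi.single j 1
  have hw : ∀ k, w k = 0 ∨ w k = 1 := fun k => by
    by_cases hki : k = i <;> by_cases hkj : k = j <;> simp_all [w]
  have hbox : ∀ r ∈ unitSquare b i j, ∀ k, b k ≤ r k ∧ r k ≤ b k + w k := by
    rintro r (rfl | rfl | rfl | rfl) k <;>
      by_cases hki : k = i <;> by_cases hkj : k = j <;> simp_all [w]
  calc ∑ k, (p k - q k) ^ 2 ≤ ∑ k, w k := sum_sq_sub_le_of_mem_box hw (hbox p hp) (hbox q hq)
    _ = 2 := by simp [w, Finset.sum_add_distrib]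

end Geometry

section Crossing

variable {d : ℕ} (A S : Set (Site d))

def crossing (u v : Site d) : ZMod 2 :=
  (if u ∈ S ∧ v ∉ A then 1 else 0) + (if v ∈ S ∧ u ∉ A then 1 else 0)

variable {A S}

lemma crossing_comm (u v : Site d) : crossing A S u v = crossing A S v u := add_comm _ _

lemma crossing_eq_zero_of_notMem {u v : Site d} (hu : u ∉ S) (hv : v ∉ S) :
    crossing A S u v = 0 := by
  simp [crossing, hu, hv]

lemma crossing_eq_zero_of_mem_iff (hS : S ⊆ A) {u v : Site d} (h : u ∈ A ↔ v ∈ A) :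
    crossing A S u v = 0 := by
  have huv : ¬(u ∈ S ∧ v ∉ A) := fun ⟨hu, hv⟩ => hv (h.mp (hS hu))
  have hvu : ¬(v ∈ S ∧ u ∉ A) := fun ⟨hv, hu⟩ => hu (h.mpr (hS hv))
  simp [crossing, huv, hvu]

lemma crossing_eq_one (hS : S ⊆ A) {u v : Site d} (hu : u ∈ S) (hv : v ∉ A) :
    crossing A S u v = 1 := by
  simp [crossing, hu, hv, hS hu]

lemma crossing_eq_indicator_add (hS : S ⊆ A) {u v : Site d} (huv : adjZ u v)
    (hu : u ∈ innerBd A → u ∈ S) (hv : v ∈ innerBd A → v ∈ S) :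
    crossing A S u v = (if u ∈ A then 1 else 0) + (if v ∈ A then 1 else 0) := by
  by_cases huA : u ∈ A <;> by_cases hvA : v ∈ A
  · simp [crossing, huA, hvA, CharTwo.add_self_eq_zero]
  · simp [crossing, huA, hvA, hu ⟨huA, v, hvA, huv⟩]
  · simp [crossing, huA, hvA, hv ⟨hvA, u, huA, adjZ_comm.mp huv⟩]
  · rw [crossing_eq_zero_of_notMem (fun h => huA (hS h)) (fun h => hvA (hS h))]
    simp [huA, hvA]

lemma isClosedForm_crossing (hS : S ⊆ A)
    (hstar : ∀ q ∈ S, ∀ p ∈ innerBd A, ∑ k, (q k - p k) ^ 2 ≤ 2 → p ∈ S) :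
    IsClosedForm fun u k => crossing A S u (u + Pi.single k 1) := by
  intro b i j
  rcases eq_or_ne i j with rfl | hij
  · rfl
  dsimp only
  rw [add_right_comm b (Pi.single j 1)]
  have hb : b ∈ unitSquare b i j := by simp [unitSquare]
  have hbi : b + Pi.single i 1 ∈ unitSquare b i j := by simp [unitSquare]
  have hbj : b + Pi.single j 1 ∈ unitSquare b i j := by simp [unitSquare]
  have hbij : b + Pi.single i 1 + Pi.single j 1 ∈ unitSquare b i j := by simp [unitSquare]
  by_cases hmeet : ∃ q ∈ unitSquare b i j, q ∈ S
  · obtain ⟨q, hq, hqS⟩ := hmeet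
    have hcorner : ∀ p ∈ unitSquare b i j, p ∈ innerBd A → p ∈ S := fun p hp hpA =>
      hstar q hqS p hpA (sum_sq_sub_le_two_of_mem_unitSquare hij hq hp)
    have hji : adjZ (b + Pi.single j 1) (b + Pi.single i 1 + Pi.single j 1) := by
      rw [add_right_comm]; exact adjZ_add_single _ _
    rw [crossing_eq_indicator_add hS (adjZ_add_single _ _) (hcorner _ hb) (hcorner _ hbi),
      crossing_eq_indicator_add hS (adjZ_add_single _ _) (hcorner _ hbi) (hcorner _ hbij),
      crossing_eq_indicator_add hS (adjZ_add_single _ _) (hcorner _ hb) (hcorner _ hbj),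
      crossing_eq_indicator_add hS hji (hcorner _ hbj) (hcorner _ hbij)]
    simp only [← add_assoc, CharTwo.add_cancel_right]
  · push Not at hmeet
    simp only [crossing_eq_zero_of_notMem (hmeet _ hb) (hmeet _ hbi),
      crossing_eq_zero_of_notMem (hmeet _ hbi) (hmeet _ hbij),
      crossing_eq_zero_of_notMem (hmeet _ hb) (hmeet _ hbj),
      crossing_eq_zero_of_notMem (hmeet _ hbj) (hmeet _ hbij)]

end Crossing

lemma eq_add_of_adjZ {d : ℕ} {F : Site d → ZMod 2} {c : Site d → Site d → ZMod 2}
    (hc : ∀ u v, c u v = c v u)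
    (hF : ∀ u k, F (u + Pi.single k 1) = F u + c u (u + Pi.single k 1))
    {u v : Site d} (huv : adjZ u v) : F v = F u + c u v := by
  obtain ⟨k, rfl | rfl⟩ := exists_eq_add_single_of_adjZ huv
  · exact hF u k
  · rw [hF, hc, CharTwo.add_cancel_right]

lemma eq_of_pathIn {X β : Type*} {adj : X → X → Prop} {W : Set X} {F : X → β}
    (hF : ∀ u v, adj u v → u ∈ W → v ∈ W → F u = F v) {p q : X} (hpq : pathIn adj W p q) :
    F p = F q := by
  induction hpq with
  | refl => rfl
  | tail _ huv ih => exact ih.trans (hF _ _ huv.1 huv.2.1 huv.2.2)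

theorem innerBd_subset_of_starClosed {d : ℕ} {A S : Set (Site d)}
    (hconn : connectedIn adjZ A) (hconnc : connectedIn adjZ Aᶜ) (hS : S ⊆ innerBd A)
    (hstar : ∀ q ∈ S, ∀ p ∈ innerBd A, ∑ k, (q k - p k) ^ 2 ≤ 2 → p ∈ S) (hne : S.Nonempty) :
    innerBd A ⊆ S := by
  have hSA : S ⊆ A := fun w hw => (hS hw).1
  obtain ⟨F, hF⟩ := (isClosedForm_crossing hSA hstar).exists_potential
  have hF_adj {u v : Site d} (huv : adjZ u v) : F v = F u + crossing A S u v :=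
    eq_add_of_adjZ crossing_comm hF huv
  have hF_const {W : Set (Site d)} (hW : ∀ u ∈ W, ∀ v ∈ W, crossing A S u v = 0)
      {p q : Site d} (hpq : pathIn adjZ W p q) : F p = F q :=
    eq_of_pathIn (fun u v huv hu hv => by rw [hF_adj huv, hW u hu v hv, add_zero]) hpq
  obtain ⟨x, hxS⟩ := hne
  obtain ⟨hxA, x', hx'A, hxx'⟩ := hS hxS
  rintro y ⟨hyA, y', hy'A, hyy'⟩
  by_contra hyS
  have hxy : F x = F y := hF_const
    (fun u hu v hv => crossing_eq_zero_of_mem_iff hSA (iff_of_true hu hv)) (hconn x hxA y hyA)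
  have hx'y' : F x' = F y' := hF_const
    (fun u hu v hv => crossing_eq_zero_of_mem_iff hSA (iff_of_false hu hv))
    (hconnc x' hx'A y' hy'A)
  have hx' : F x' = F x + 1 := by rw [hF_adj hxx', crossing_eq_one hSA hxS hx'A]
  have hy' : F y' = F y := by
    rw [hF_adj hyy', crossing_eq_zero_of_notMem hyS (fun h => hy'A (hSA h)), add_zero]
  exact one_ne_zero (add_eq_left.mp (by rw [← hx', hx'y', hy', hxy]))

theorem starConnected_innerBoundary_general {d : ℕ} (A : Set (Site d))
    (hconn : connectedIn adjZ A) (hconnc : connectedIn adjZ Aᶜ) :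
    ∀ x ∈ innerBd A, ∀ y ∈ innerBd A,
      Relation.ReflTransGen
        (fun u v : Site d =>
          u ∈ innerBd A ∧ v ∈ innerBd A ∧ (∑ i, (u i - v i) ^ 2) ≤ 2) x y := by
  intro x hx y hy
  have hy_mem := innerBd_subset_of_starClosed
    (S := {w | w ∈ innerBd A ∧ Relation.ReflTransGen
      (fun u v : Site d => u ∈ innerBd A ∧ v ∈ innerBd A ∧ (∑ i, (u i - v i) ^ 2) ≤ 2) x w})
    hconn hconnc (fun w hw => hw.1) (fun q hq p hp hqp => ⟨hp, hq.2.tail ⟨hq.1, hp, hqp⟩⟩)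
    ⟨x, hx, .refl⟩ hy
  exact hy_mem.2

/-- **Lemma 3.7** (*-connectedness of the inner boundary).  If `A ⊆ ℤ^d` is a finite
connected set whose complement is connected, then `∂(Aᶜ)` is *-connected:  any two of
its sites can be joined by a path of sites of `∂(Aᶜ)` whose individual steps join only
pairs of sites of `ℤ^d` with Euclidean distance not exceeding `√2`. -/
theorem starConnected_innerBoundary {d : ℕ} (A : Set (Site d)) (hfin : A.Finite)
    (hconn : connectedIn adjZ A) (hconnc : connectedIn adjZ Aᶜ) :
    ∀ x ∈ innerBd A, ∀ y ∈ innerBd A,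
      Relation.ReflTransGen
        (fun u v : Site d =>
          u ∈ innerBd A ∧ v ∈ innerBd A ∧ (∑ i, (u i - v i) ^ 2) ≤ 2) x y :=
  starConnected_innerBoundary_general A hconn hconnc
end
end
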